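/- Let f be a nonnegative measurable function on R^3 x R^3 with finite L^{1+1/k} norm (0 < k < 7/2) and finite kinetic energy E_kin(f) = (1/2)∫∫ |v|^2 f dv dx. Then the induced spatial density ρ_f(x) = ∫ f(x,v) dv belongs to L^{1+1/n}(R^3) with n = k + 3/2, and ||ρ_f||_{1+1/n} ≤ C ||f||_{1+1/k}^{(k+1)/(n+1)} E_kin(f)^{3/(2k+5)} for a universal constant C. -/

import Mathlib

/-!
For fixed `x`, split the velocity integral `ρ_f(x) = ∫ f(x, v) dv` at `|v| = R`. On the ball,
Hölder's inequality gives `|B_R|^{1/(k+1)} ‖f(x, ·)‖_{1+1/k}`; outside it, `f ≤ |v|² f / R²`.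
Optimizing over `R` bounds `ρ_f(x)` by a product of powers of `∫ f(x, ·)^{1+1/k}` and
`∫ |v|² f(x, ·)` whose exponents, once `ρ_f(x)` is raised to the power `1 + 1/n`, sum to one,
so Hölder's inequality in `x` integrates the bound. The argument runs in `ℝ≥0∞`, where no
integrability has to be tracked, and is transferred to real integrals at the end.
-/

open MeasureTheory Filter Metric Module
open scoped ENNReal Topology
noncomputable section

abbrev E3 := EuclideanSpace ℝ (Fin 3)

/-- The spatial density induced by a phase-space density on `ℝ³ × ℝ³`. -/
def spatialDensity (f : E3 × E3 → ℝ) (x : E3) : ℝ := ∫ v, f (x, v)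

/-- The kinetic energy `(1/2)∫∫ |v|² f dv dx`. -/
def kineticEnergy (f : E3 × E3 → ℝ) : ℝ := (1/2) * ∫ p, ‖p.2‖^2 * f p

lemma eq_zero_of_forall_le_mul_ofReal_rpow_neg {P b : ℝ≥0∞} {β : ℝ} (hβ : 0 < β) (hb : b ≠ ∞)
    (h : ∀ R : ℝ, 0 < R → P ≤ b * ENNReal.ofReal R ^ (-β)) : P = 0 := by
  have hlim : Tendsto (fun R : ℝ => b * ENNReal.ofReal (R ^ (-β))) atTop (𝓝 0) := by
    simpa using ENNReal.Tendsto.const_mul (ENNReal.tendsto_ofReal (tendsto_rpow_neg_atTop hβ))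
      (Or.inr hb)
  refine nonpos_iff_eq_zero.1 (ge_of_tendsto hlim ?_)
  filter_upwards [eventually_gt_atTop 0] with R hR
  rw [← ENNReal.ofReal_rpow_of_pos hR]
  exact h R hR

lemma mul_div_rpow_eq {x : ℝ≥0∞} (hx₀ : x ≠ 0) (hx : x ≠ ∞) (y : ℝ≥0∞) {t : ℝ} (ht : 0 ≤ t) :
    x * (y / x) ^ t = x ^ (1 - t) * y ^ t := by
  rw [ENNReal.div_rpow_of_nonneg _ _ ht, ENNReal.rpow_sub _ _ hx₀ hx, ENNReal.rpow_one,
    div_eq_mul_inv, div_eq_mul_inv, mul_comm (y ^ t), mul_assoc]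

lemma le_two_mul_rpow_mul_rpow_of_forall_le {α β : ℝ} (hα : 0 < α) (hβ : 0 < β)
    {P a b : ℝ≥0∞} (ha : a ≠ ∞) (hb : b ≠ ∞)
    (h : ∀ R : ℝ, 0 < R → P ≤ a * ENNReal.ofReal R ^ α + b * ENNReal.ofReal R ^ (-β)) :
    P ≤ 2 * a ^ (β / (α + β)) * b ^ (α / (α + β)) := by
  rcases eq_or_ne a 0 with rfl | ha₀
  · simp [eq_zero_of_forall_le_mul_ofReal_rpow_neg hβ hb (by simpa using h)]
  rcases eq_or_ne b 0 with rfl | hb₀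
  · refine (eq_zero_of_forall_le_mul_ofReal_rpow_neg hα ha fun R hR => ?_).trans_le zero_le
    rw [ENNReal.rpow_neg, ← ENNReal.inv_rpow, ← ENNReal.ofReal_inv_of_pos hR]
    simpa using h R⁻¹ (inv_pos.2 hR)
  have hαβ : 0 < α + β := by linarith
  have hba : (b / a) ^ (1 / (α + β)) ≠ ∞ :=
    ENNReal.rpow_ne_top_of_nonneg (by positivity) (ENNReal.div_ne_top hb ha₀)
  have hba₀ : 0 < ((b / a) ^ (1 / (α + β))).toReal :=
    ENNReal.toReal_pos (by simp [ENNReal.rpow_eq_zero_iff, ha, hb₀, hαβ, hαβ.not_gt]) hba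
  -- `R = (b / a) ^ (1 / (α + β))` balances the two terms
  have key := h _ hba₀
  rw [ENNReal.ofReal_toReal hba, ← ENNReal.rpow_mul, ← ENNReal.rpow_mul, one_div_mul_eq_div,
    one_div_mul_eq_div, neg_div, ENNReal.rpow_neg, ← ENNReal.inv_rpow,
    ENNReal.inv_div (Or.inl ha) (Or.inl ha₀), mul_div_rpow_eq ha₀ ha _ (by positivity),
    mul_div_rpow_eq hb₀ hb _ (by positivity)] at key
  have hθ : 1 - α / (α + β) = β / (α + β) := by field_simp; ring
  have hθ' : 1 - β / (α + β) = α / (α + β) := by field_simp; ring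
  rw [hθ, hθ'] at key
  exact key.trans_eq (by ring)

lemma setLIntegral_compl_ball_le {E : Type*} [NormedAddCommGroup E] [MeasurableSpace E]
    [OpensMeasurableSpace E] (μ : Measure E) {R : ℝ} (hR : 0 < R) (φ : E → ℝ≥0∞) :
    ∫⁻ v in (ball 0 R)ᶜ, φ v ∂μ ≤
      (∫⁻ v, ENNReal.ofReal (‖v‖ ^ 2) * φ v ∂μ) * ENNReal.ofReal R ^ (-2 : ℝ) := by
  have hR2 : ENNReal.ofReal R ^ (-2 : ℝ) = ENNReal.ofReal (R ^ 2)⁻¹ := by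
    rw [ENNReal.ofReal_rpow_of_pos hR, Real.rpow_neg hR.le, Real.rpow_two]
  have hout : ∀ v ∈ (ball (0 : E) R)ᶜ,
      φ v ≤ ENNReal.ofReal R ^ (-2 : ℝ) * (ENNReal.ofReal (‖v‖ ^ 2) * φ v) := by
    intro v hv
    have hRv : R ^ 2 ≤ ‖v‖ ^ 2 := by
      gcongr
      simpa using hv
    rw [← mul_assoc, hR2, ← ENNReal.ofReal_mul (by positivity)]
    refine le_mul_of_one_le_left zero_le ?_
    exact ENNReal.one_le_ofReal.2 ((one_le_inv_mul₀ (by positivity)).2 hRv)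
  calc ∫⁻ v in (ball 0 R)ᶜ, φ v ∂μ
      ≤ ∫⁻ v in (ball 0 R)ᶜ, ENNReal.ofReal R ^ (-2 : ℝ) * (ENNReal.ofReal (‖v‖ ^ 2) * φ v) ∂μ :=
        setLIntegral_mono' measurableSet_ball.compl hout
    _ ≤ ∫⁻ v, ENNReal.ofReal R ^ (-2 : ℝ) * (ENNReal.ofReal (‖v‖ ^ 2) * φ v) ∂μ :=
        setLIntegral_le_lintegral _ _
    _ = _ := by
        rw [lintegral_const_mul' _ _ (by simp [hR2]), mul_comm]

lemma lintegral_rpow_one_div_le_of_ae_le {X : Type*} [MeasurableSpace X] {ν : Measure X}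
    {P G H : X → ℝ≥0∞} {K : ℝ≥0∞} {a b q : ℝ} (ha : 0 ≤ a) (hb : 0 ≤ b) (hq : 0 < q)
    (habq : (a + b) * q = 1) (hG : AEMeasurable G ν) (hH : AEMeasurable H ν)
    (hP : ∀ᵐ x ∂ν, P x ≤ K * G x ^ a * H x ^ b) :
    (∫⁻ x, P x ^ q ∂ν) ^ (1 / q) ≤ K * (∫⁻ x, G x ∂ν) ^ a * (∫⁻ x, H x ∂ν) ^ b := by
  have hpow : ∀ x, (K * G x ^ a * H x ^ b) ^ q = K ^ q * (G x ^ (a * q) * H x ^ (b * q)) := by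
    intro x
    rw [ENNReal.mul_rpow_of_nonneg _ _ hq.le, ENNReal.mul_rpow_of_nonneg _ _ hq.le,
      ← ENNReal.rpow_mul, ← ENNReal.rpow_mul, mul_assoc]
  have hHolder := ENNReal.lintegral_mul_norm_pow_le hG hH (mul_nonneg ha hq.le)
    (mul_nonneg hb hq.le) (by rw [← add_mul, habq])
  calc (∫⁻ x, P x ^ q ∂ν) ^ (1 / q)
      ≤ (∫⁻ x, K ^ q * (G x ^ (a * q) * H x ^ (b * q)) ∂ν) ^ (1 / q) := by
        simp_rw [← hpow]
        gcongr ?_ ^ _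
        exact lintegral_mono_ae (hP.mono fun x hx => ENNReal.rpow_le_rpow hx hq.le)
    _ ≤ (K ^ q * ((∫⁻ x, G x ∂ν) ^ (a * q) * (∫⁻ x, H x ∂ν) ^ (b * q))) ^ (1 / q) := by
        rw [lintegral_const_mul'' _ (by fun_prop)]
        gcongr
    _ = K * (∫⁻ x, G x ∂ν) ^ a * (∫⁻ x, H x ∂ν) ^ b := by
        rw [ENNReal.mul_rpow_of_nonneg _ _ (by positivity),
          ENNReal.mul_rpow_of_nonneg _ _ (by positivity), ← ENNReal.rpow_mul, ← ENNReal.rpow_mul,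
          ← ENNReal.rpow_mul, mul_one_div_cancel hq.ne', mul_assoc a, mul_assoc b,
          mul_one_div_cancel hq.ne', mul_one, mul_one, ENNReal.rpow_one, mul_assoc]

section AddHaar

variable {E : Type*} [NormedAddCommGroup E] [NormedSpace ℝ E] [FiniteDimensional ℝ E]
  [MeasurableSpace E] [BorelSpace E] (μ : Measure E) [μ.IsAddHaarMeasure]

lemma setLIntegral_ball_le {k R : ℝ} (hk : 0 < k) (hR : 0 < R) {φ : E → ℝ≥0∞}
    (hφ : AEMeasurable φ μ) :
    ∫⁻ v in ball 0 R, φ v ∂μ ≤ μ (ball 0 1) ^ (1 / (k + 1)) *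
      (∫⁻ v, φ v ^ (1 + 1 / k) ∂μ) ^ (k / (k + 1)) *
        ENNReal.ofReal R ^ (finrank ℝ E / (k + 1)) := by
  have hpq : (1 + 1 / k).HolderConjugate (k + 1) :=
    Real.holderConjugate_iff.2 ⟨by simp [hk], by field_simp⟩
  have hHolder := ENNReal.lintegral_mul_le_Lp_mul_Lq (μ.restrict (ball 0 R)) hpq hφ.restrict
    (aemeasurable_const (b := (1 : ℝ≥0∞)))
  simp only [Pi.mul_apply, mul_one, ENNReal.one_rpow, setLIntegral_const, one_mul] at hHolder
  calc ∫⁻ v in ball 0 R, φ v ∂μ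
      ≤ (∫⁻ v in ball 0 R, φ v ^ (1 + 1 / k) ∂μ) ^ (1 / (1 + 1 / k)) *
          μ (ball 0 R) ^ (1 / (k + 1)) := hHolder
    _ ≤ (∫⁻ v, φ v ^ (1 + 1 / k) ∂μ) ^ (k / (k + 1)) * μ (ball 0 R) ^ (1 / (k + 1)) := by
        rw [show 1 / (1 + 1 / k) = k / (k + 1) by field_simp]
        gcongr
        exact Measure.restrict_le_self
    _ = _ := by
        rw [Measure.addHaar_ball_of_pos μ _ hR, ← Real.rpow_natCast,
          ← ENNReal.ofReal_rpow_of_pos hR, ENNReal.mul_rpow_of_nonneg _ _ (by positivity),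
          ← ENNReal.rpow_mul, mul_one_div]
        ring

lemma lintegral_le_interpolation [Nontrivial E] {k n : ℝ} (hk : 0 < k)
    (hn : n = k + finrank ℝ E / 2) {φ : E → ℝ≥0∞} (hφ : AEMeasurable φ μ)
    (hG : ∫⁻ v, φ v ^ (1 + 1 / k) ∂μ ≠ ∞) (hH : ∫⁻ v, ENNReal.ofReal (‖v‖ ^ 2) * φ v ∂μ ≠ ∞) :
    ∫⁻ v, φ v ∂μ ≤ 2 * μ (ball 0 1) ^ (1 / (n + 1)) * (∫⁻ v, φ v ^ (1 + 1 / k) ∂μ) ^ (k / (n + 1)) *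
      (∫⁻ v, ENNReal.ofReal (‖v‖ ^ 2) * φ v ∂μ) ^ (finrank ℝ E / (2 * (n + 1))) := by
  have hd : (0 : ℝ) < finrank ℝ E := mod_cast finrank_pos
  have hn₁ : 0 < n + 1 := by rw [hn]; positivity
  have hsplit (R : ℝ) (hR : 0 < R) : ∫⁻ v, φ v ∂μ ≤
      μ (ball 0 1) ^ (1 / (k + 1)) * (∫⁻ v, φ v ^ (1 + 1 / k) ∂μ) ^ (k / (k + 1)) *
        ENNReal.ofReal R ^ (finrank ℝ E / (k + 1)) +
      (∫⁻ v, ENNReal.ofReal (‖v‖ ^ 2) * φ v ∂μ) * ENNReal.ofReal R ^ (-2 : ℝ) := by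
    rw [← lintegral_add_compl φ (measurableSet_ball (x := 0) (ε := R))]
    exact add_le_add (setLIntegral_ball_le μ hk hR hφ) (setLIntegral_compl_ball_le μ hR φ)
  have hbound := le_two_mul_rpow_mul_rpow_of_forall_le (by positivity) two_pos
    (ENNReal.mul_ne_top (ENNReal.rpow_ne_top_of_nonneg (by positivity) measure_ball_lt_top.ne)
      (ENNReal.rpow_ne_top_of_nonneg (by positivity) hG)) hH hsplit
  have hθ : 2 / (finrank ℝ E / (k + 1) + 2) = (k + 1) / (n + 1) := by
    rw [hn]; field_simp; ring
  have hθ' : finrank ℝ E / (k + 1) / (finrank ℝ E / (k + 1) + 2) = finrank ℝ E / (2 * (n + 1)) := by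
    rw [hn]; field_simp; ring
  rw [hθ, hθ', ENNReal.mul_rpow_of_nonneg _ _ (by positivity), ← ENNReal.rpow_mul,
    ← ENNReal.rpow_mul, ← mul_assoc, show 1 / (k + 1) * ((k + 1) / (n + 1)) = 1 / (n + 1) by
      field_simp, show k / (k + 1) * ((k + 1) / (n + 1)) = k / (n + 1) by field_simp] at hbound
  exact hbound

theorem lintegral_lintegral_rpow_le [Nontrivial E] {X : Type*} [MeasurableSpace X]
    (ν : Measure X) {k n : ℝ} (hk : 0 < k) (hn : n = k + finrank ℝ E / 2)
    {F : X × E → ℝ≥0∞} (hF : Measurable F)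
    (hG : ∫⁻ p, F p ^ (1 + 1 / k) ∂ν.prod μ ≠ ∞)
    (hH : ∫⁻ p, ENNReal.ofReal (‖p.2‖ ^ 2) * F p ∂ν.prod μ ≠ ∞) :
    (∫⁻ x, (∫⁻ v, F (x, v) ∂μ) ^ (1 + 1 / n) ∂ν) ^ (n / (n + 1)) ≤
      2 * μ (ball 0 1) ^ (1 / (n + 1)) * (∫⁻ p, F p ^ (1 + 1 / k) ∂ν.prod μ) ^ (k / (n + 1)) *
        (∫⁻ p, ENNReal.ofReal (‖p.2‖ ^ 2) * F p ∂ν.prod μ) ^ (finrank ℝ E / (2 * (n + 1))) := by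
  have hn₀ : 0 < n := by rw [hn]; positivity
  have hFm : Measurable fun p : X × E => F p ^ (1 + 1 / k) := hF.pow_const _
  have hFe : Measurable fun p : X × E => ENNReal.ofReal (‖p.2‖ ^ 2) * F p := by fun_prop
  rw [lintegral_prod _ hFm.aemeasurable] at hG ⊢
  rw [lintegral_prod _ hFe.aemeasurable] at hH ⊢
  have hpt : ∀ᵐ x ∂ν, ∫⁻ v, F (x, v) ∂μ ≤ 2 * μ (ball 0 1) ^ (1 / (n + 1)) *
      (∫⁻ v, F (x, v) ^ (1 + 1 / k) ∂μ) ^ (k / (n + 1)) *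
      (∫⁻ v, ENNReal.ofReal (‖v‖ ^ 2) * F (x, v) ∂μ) ^ (finrank ℝ E / (2 * (n + 1))) := by
    filter_upwards [ae_lt_top hFm.lintegral_prod_right' hG,
      ae_lt_top hFe.lintegral_prod_right' hH] with x hGx hHx
    exact lintegral_le_interpolation μ hk hn (hF.comp measurable_prodMk_left).aemeasurable
      hGx.ne hHx.ne
  have hexp : (k / (n + 1) + finrank ℝ E / (2 * (n + 1))) * (1 + 1 / n) = 1 := by
    rw [hn]; field_simp
  rw [show n / (n + 1) = 1 / (1 + 1 / n) by field_simp]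
  exact lintegral_rpow_one_div_le_of_ae_le (by positivity) (by positivity) (by positivity) hexp
    hFm.lintegral_prod_right'.aemeasurable hFe.lintegral_prod_right'.aemeasurable hpt

end AddHaar

lemma spatialDensity_eq_toReal_lintegral {f : E3 × E3 → ℝ} (hf : Measurable f)
    (hf₀ : ∀ p, 0 ≤ f p) (x : E3) :
    spatialDensity f x = (∫⁻ v, ENNReal.ofReal (f (x, v))).toReal :=
  integral_eq_lintegral_of_nonneg_ae (ae_of_all _ fun _ => hf₀ _)
    (hf.comp measurable_prodMk_left).aestronglyMeasurable

theorem spatialDensity_rpow_integrable_and_le {k : ℝ} (hk : 0 < k) {f : E3 × E3 → ℝ}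
    (hf : Measurable f) (hf₀ : ∀ p, 0 ≤ f p) (hfm : Integrable fun p => f p ^ (1 + 1 / k))
    (hfe : Integrable fun p => ‖p.2‖ ^ 2 * f p) :
    Integrable (fun x => spatialDensity f x ^ (1 + 1 / (k + 3 / 2))) ∧
    (∫ x, spatialDensity f x ^ (1 + 1 / (k + 3 / 2))) ^ ((k + 3 / 2) / (k + 3 / 2 + 1)) ≤
      2 * (volume (ball (0 : E3) 1)).toReal ^ (1 / (k + 3 / 2 + 1)) *
        (∫ p, f p ^ (1 + 1 / k)) ^ (k / (k + 3 / 2 + 1)) *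
        (∫ p, ‖p.2‖ ^ 2 * f p) ^ (3 / (2 * (k + 3 / 2 + 1))) := by
  set n := k + 3 / 2 with hn
  set P : E3 → ℝ≥0∞ := fun x => ∫⁻ v, ENNReal.ofReal (f (x, v))
  have hF : Measurable fun p => ENNReal.ofReal (f p) := hf.ennreal_ofReal
  have hG : ∫⁻ p, ENNReal.ofReal (f p) ^ (1 + 1 / k) = ENNReal.ofReal (∫ p, f p ^ (1 + 1 / k)) := by
    rw [ofReal_integral_eq_lintegral_ofReal hfm (ae_of_all _ fun p => Real.rpow_nonneg (hf₀ p) _)]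
    simp_rw [ENNReal.ofReal_rpow_of_nonneg (hf₀ _) (by positivity : (0 : ℝ) ≤ 1 + 1 / k)]
  have hH : ∫⁻ p, ENNReal.ofReal (‖p.2‖ ^ 2) * ENNReal.ofReal (f p) =
      ENNReal.ofReal (∫ p, ‖p.2‖ ^ 2 * f p) := by
    rw [ofReal_integral_eq_lintegral_ofReal hfe
      (ae_of_all _ fun p => mul_nonneg (sq_nonneg _) (hf₀ p))]
    simp_rw [ENNReal.ofReal_mul (sq_nonneg _)]
  have hbound := lintegral_lintegral_rpow_le volume volume hk (n := n)
    (by rw [hn, finrank_euclideanSpace_fin]; push_cast; ring) hF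
    (by rw [← Measure.volume_eq_prod, hG]; exact ENNReal.ofReal_ne_top)
    (by rw [← Measure.volume_eq_prod, hH]; exact ENNReal.ofReal_ne_top)
  simp only [← Measure.volume_eq_prod, hG, hH, finrank_euclideanSpace, Fintype.card_fin,
    Nat.cast_ofNat] at hbound
  have hRHS : 2 * volume (ball (0 : E3) 1) ^ (1 / (n + 1)) *
      ENNReal.ofReal (∫ p, f p ^ (1 + 1 / k)) ^ (k / (n + 1)) *
      ENNReal.ofReal (∫ p, ‖p.2‖ ^ 2 * f p) ^ (3 / (2 * (n + 1))) ≠ ∞ := by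
    have := (measure_ball_lt_top (μ := volume) (x := (0 : E3)) (r := 1)).ne
    finiteness
  have hPq : Measurable fun x => P x ^ (1 + 1 / n) := hF.lintegral_prod_right'.pow_const _
  have hPq_fin : ∫⁻ x, P x ^ (1 + 1 / n) ≠ ∞ :=
    (ENNReal.rpow_eq_top_iff_of_pos (by positivity : 0 < n / (n + 1))).not.1
      (hbound.trans_lt hRHS.lt_top).ne
  have hρ x : spatialDensity f x ^ (1 + 1 / n) = (P x ^ (1 + 1 / n)).toReal := by
    rw [spatialDensity_eq_toReal_lintegral hf hf₀, ENNReal.toReal_rpow]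
  simp_rw [hρ]
  refine ⟨integrable_toReal_of_lintegral_ne_top hPq.aemeasurable hPq_fin, ?_⟩
  rw [integral_toReal hPq.aemeasurable (ae_lt_top hPq hPq_fin), ENNReal.toReal_rpow]
  refine (ENNReal.toReal_mono hRHS hbound).trans_eq ?_
  simp only [ENNReal.toReal_mul, ← ENNReal.toReal_rpow, ENNReal.toReal_ofNat]
  rw [ENNReal.toReal_ofReal (integral_nonneg fun p => Real.rpow_nonneg (hf₀ p) _),
    ENNReal.toReal_ofReal (integral_nonneg fun p => mul_nonneg (sq_nonneg _) (hf₀ p))]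

/-- for `0 < k < 7/2` and `n = k + 3/2`, a nonnegative `f` with finite
`L^{1+1/k}` norm and finite kinetic energy induces a density `ρ_f ∈ L^{1+1/n}(ℝ³)` with
`‖ρ_f‖_{1+1/n} ≤ C ‖f‖_{1+1/k}^{(k+1)/(n+1)} E_kin(f)^{3/(2k+5)}`. -/
theorem statement0 :
    ∃ C : ℝ, 0 < C ∧ ∀ (k : ℝ), 0 < k → k < 7/2 →
    ∀ f : E3 × E3 → ℝ, Measurable f → (∀ p, 0 ≤ f p) →
    Integrable (fun p => f p ^ (1 + 1/k)) →
    Integrable (fun p => ‖p.2‖^2 * f p) →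
    Integrable (fun x => spatialDensity f x ^ (1 + 1/(k + 3/2))) ∧
    (∫ x, spatialDensity f x ^ (1 + 1/(k + 3/2))) ^ ((k + 3/2)/(k + 3/2 + 1)) ≤
      C * ((∫ p, f p ^ (1 + 1/k)) ^ (k/(k+1))) ^ ((k+1)/(k + 3/2 + 1)) *
        kineticEnergy f ^ (3/(2*k + 5)) := by
  set c := (volume (ball (0 : E3) 1)).toReal
  refine ⟨4 * (1 + c), by positivity, fun k hk _ f hf hf₀ hfm hfe => ?_⟩
  obtain ⟨hint, hle⟩ := spatialDensity_rpow_integrable_and_le hk hf hf₀ hfm hfe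
  refine ⟨hint, hle.trans ?_⟩
  set A := ∫ p, f p ^ (1 + 1 / k)
  have hA : 0 ≤ A := integral_nonneg fun p => Real.rpow_nonneg (hf₀ p) _
  have hE : 0 ≤ kineticEnergy f :=
    mul_nonneg (by norm_num) (integral_nonneg fun p => mul_nonneg (sq_nonneg _) (hf₀ p))
  have hc₀ : 0 ≤ c := ENNReal.toReal_nonneg
  have hc : c ^ (1 / (k + 3 / 2 + 1)) ≤ 1 + c :=
    (Real.rpow_le_rpow hc₀ (by linarith) (by positivity)).trans
      (Real.rpow_le_self_of_one_le (by linarith) ((div_le_one (by positivity)).2 (by linarith)))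
  have h2 : (2 : ℝ) ^ (3 / (2 * k + 5)) ≤ 2 :=
    Real.rpow_le_self_of_one_le one_le_two ((div_le_one (by positivity)).2 (by linarith))
  rw [show ∫ p, ‖p.2‖ ^ 2 * f p = 2 * kineticEnergy f by rw [kineticEnergy]; ring,
    show 3 / (2 * (k + 3 / 2 + 1)) = 3 / (2 * k + 5) by ring, Real.mul_rpow zero_le_two hE,
    ← Real.rpow_mul hA, show k / (k + 1) * ((k + 1) / (k + 3 / 2 + 1)) = k / (k + 3 / 2 + 1) by
      field_simp]
  calc 2 * c ^ (1 / (k + 3 / 2 + 1)) * A ^ (k / (k + 3 / 2 + 1)) *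
        (2 ^ (3 / (2 * k + 5)) * kineticEnergy f ^ (3 / (2 * k + 5)))
      = (2 * c ^ (1 / (k + 3 / 2 + 1)) * 2 ^ (3 / (2 * k + 5))) *
          (A ^ (k / (k + 3 / 2 + 1)) * kineticEnergy f ^ (3 / (2 * k + 5))) := by ring
    _ ≤ (2 * (1 + c) * 2) * (A ^ (k / (k + 3 / 2 + 1)) * kineticEnergy f ^ (3 / (2 * k + 5))) := by
        gcongr
    _ = 4 * (1 + c) * A ^ (k / (k + 3 / 2 + 1)) * kineticEnergy f ^ (3 / (2 * k + 5)) := by ring
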